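/- arXiv:2204.02683 — 2 statements merged into one kernel-verified Lean document; each statement's English description precedes it below -/
import Mathlib

section
/- For every σ > 0 there exists a constant c ∈ ℝ, depending only on w, σ, k and N (not on f), such that for every f : X → ℝ^k, L_σ(f) = σ·‖F̃F̃ᵀ − ((1/σ)·Ā + (1 − 1/σ)·I_N)‖_F² + c, where F̃ ∈ ℝ^{X×k} is the matrix whose x-th row is √(w(x))·f(x)ᵀ. -/
open Finset Matrix

/-- The degree `w(x) = ∑_{x'} w(x,x')` of a vertex in the positive-pair graph. -/
noncomputable def deg {N : ℕ} (w : Fin N → Fin N → ℝ) (x : Fin N) : ℝ := ∑ x', w x x'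

/-- The generalized spectral contrastive loss `L_σ(f)`. -/
noncomputable def Lgen {N k : ℕ} (w : Fin N → Fin N → ℝ) (σ : ℝ)
    (f : Fin N → Fin k → ℝ) : ℝ :=
  (∑ x, ∑ x', w x x' * ∑ l, (f x l - f x' l) ^ 2) +
    σ * ∑ a, ∑ b, ((∑ x, deg w x * (f x a * f x b)) - if a = b then (1 : ℝ) else 0) ^ 2

/-- The normalized adjacency matrix `Ā` with entries `w(x,x')/√(w(x)w(x'))`. -/
noncomputable def nadj {N : ℕ} (w : Fin N → Fin N → ℝ) : Matrix (Fin N) (Fin N) ℝ :=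
  Matrix.of fun x x' => w x x' / Real.sqrt (deg w x * deg w x')

/-- The matrix `F̃` whose `x`-th row is `√(w(x))·f(x)ᵀ`. -/
noncomputable def Ftil {N k : ℕ} (w : Fin N → Fin N → ℝ) (f : Fin N → Fin k → ℝ) :
    Matrix (Fin N) (Fin k) ℝ :=
  Matrix.of fun x l => Real.sqrt (deg w x) * f x l

lemma swap4 {n m : ℕ} (h : Fin m → Fin m → Fin n → Fin n → ℝ) :
    (∑ a, ∑ b, ∑ x, ∑ x', h a b x x') = ∑ x, ∑ x', ∑ a, ∑ b, h a b x x' := by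
  calc ∑ a, ∑ b, ∑ x, ∑ x', h a b x x'
      = ∑ a, ∑ x, ∑ b, ∑ x', h a b x x' :=
        Finset.sum_congr rfl fun a _ => Finset.sum_comm
    _ = ∑ x, ∑ a, ∑ b, ∑ x', h a b x x' := Finset.sum_comm
    _ = ∑ x, ∑ a, ∑ x', ∑ b, h a b x x' :=
        Finset.sum_congr rfl fun x _ => Finset.sum_congr rfl fun a _ => Finset.sum_comm
    _ = ∑ x, ∑ x', ∑ a, ∑ b, h a b x x' :=
        Finset.sum_congr rfl fun x _ => Finset.sum_comm

/-- `L_σ(f) = σ·‖F̃F̃ᵀ − ((1/σ)Ā + (1−1/σ)I)‖_F² + c`. -/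
theorem stmt1 {N k : ℕ} (w : Fin N → Fin N → ℝ)
    (hsymm : ∀ x x', w x x' = w x' x)
    (hnonneg : ∀ x x', 0 ≤ w x x')
    (hsum : ∑ x, ∑ x', w x x' = 1)
    (hdeg : ∀ x, 0 < deg w x)
    (σ : ℝ) (hσ : 0 < σ) :
    ∃ c : ℝ, ∀ f : Fin N → Fin k → ℝ,
      Lgen w σ f =
        σ * (∑ x, ∑ x',
          ((Ftil w f * (Ftil w f)ᵀ -
            (σ⁻¹ • nadj w + (1 - σ⁻¹) • (1 : Matrix (Fin N) (Fin N) ℝ))) x x') ^ 2) + c := by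
  classical
  set B : Matrix (Fin N) (Fin N) ℝ :=
    σ⁻¹ • nadj w + (1 - σ⁻¹) • (1 : Matrix (Fin N) (Fin N) ℝ) with hB
  refine ⟨σ * k - σ * ∑ x, ∑ x', (B x x') ^ 2, ?_⟩
  intro f
  have hσ0 : σ ≠ 0 := hσ.ne'
  have hs2 : ∀ x, Real.sqrt (deg w x) * Real.sqrt (deg w x) = deg w x :=
    fun x => Real.mul_self_sqrt (hdeg x).le
  have hspos : ∀ x, 0 < Real.sqrt (deg w x) := fun x => Real.sqrt_pos.2 (hdeg x)
  set ip : Fin N → Fin N → ℝ := fun x x' => ∑ l, f x l * f x' l with hip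
  set M := Ftil w f * (Ftil w f)ᵀ with hM
  have hMe : ∀ x x', M x x' = Real.sqrt (deg w x) * Real.sqrt (deg w x') * ip x x' := by
    intro x x'
    simp only [hM, Matrix.mul_apply, Matrix.transpose_apply, Ftil, Matrix.of_apply, hip]
    rw [Finset.mul_sum]
    exact Finset.sum_congr rfl fun l _ => by ring
  have hBe : ∀ x x', B x x' =
      σ⁻¹ * (w x x' / (Real.sqrt (deg w x) * Real.sqrt (deg w x'))) +
        (1 - σ⁻¹) * (if x = x' then 1 else 0) := by
    intro x x'
    simp only [hB, Matrix.add_apply, Matrix.smul_apply, Matrix.one_apply, nadj,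
      Matrix.of_apply, smul_eq_mul]
    rw [Real.sqrt_mul (hdeg x).le]
  set SA : ℝ := ∑ x, ∑ x', w x x' * ip x x' with hSA
  set ST : ℝ := ∑ x, deg w x * ip x x with hST
  set SS : ℝ := ∑ x, ∑ x', deg w x * deg w x' * (ip x x') ^ 2 with hSS
  set SQ : ℝ := ∑ x, ∑ x', (B x x') ^ 2 with hSQ
  -- left hand side, first term
  have hL1 : (∑ x, ∑ x', w x x' * ∑ l, (f x l - f x' l) ^ 2) = 2 * ST - 2 * SA := by
    have hexp : ∀ x x', w x x' * ∑ l, (f x l - f x' l) ^ 2 =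
        w x x' * ip x x + w x x' * ip x' x' - 2 * (w x x' * ip x x') := by
      intro x x'
      have h1 : (∑ l, (f x l - f x' l) ^ 2) = ip x x + ip x' x' - 2 * ip x x' := by
        simp only [hip, Finset.mul_sum, ← Finset.sum_add_distrib, ← Finset.sum_sub_distrib]
        exact Finset.sum_congr rfl fun l _ => by ring
      rw [h1]; ring
    simp only [hexp, Finset.sum_sub_distrib, Finset.sum_add_distrib]
    have e1 : (∑ x, ∑ x', w x x' * ip x x) = ST := by
      refine Finset.sum_congr rfl fun x _ => ?_
      rw [← Finset.sum_mul]; rfl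
    have e2 : (∑ x, ∑ x', w x x' * ip x' x') = ST := by
      rw [Finset.sum_comm]
      refine Finset.sum_congr rfl fun x' _ => ?_
      rw [← Finset.sum_mul]
      congr 1
      exact Finset.sum_congr rfl fun x _ => hsymm x x'
    have e3 : (∑ x, ∑ x', 2 * (w x x' * ip x x')) = 2 * SA := by
      rw [hSA, Finset.mul_sum]
      exact Finset.sum_congr rfl fun x _ => (Finset.mul_sum _ _ _).symm
    rw [e1, e2, e3]; ring
  -- left hand side, second term
  have hL2 : (∑ a, ∑ b, ((∑ x, deg w x * (f x a * f x b)) -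
      if a = b then (1 : ℝ) else 0) ^ 2) = SS - 2 * ST + k := by
    have hexp : ∀ a b : Fin k, ((∑ x, deg w x * (f x a * f x b)) -
        if a = b then (1 : ℝ) else 0) ^ 2 =
        (∑ x, ∑ x', (deg w x * (f x a * f x b)) * (deg w x' * (f x' a * f x' b)))
          - 2 * (if a = b then (∑ x, deg w x * (f x a * f x b)) else 0)
          + (if a = b then (1:ℝ) else 0) := by
      intro a b
      rw [sub_sq, sq, Finset.sum_mul_sum]
      by_cases h : a = b <;> simp [h]
    simp only [hexp, Finset.sum_sub_distrib, Finset.sum_add_distrib]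
    have e1 : (∑ a, ∑ b, ∑ x, ∑ x',
        (deg w x * (f x a * f x b)) * (deg w x' * (f x' a * f x' b))) = SS := by
      rw [swap4]
      refine Finset.sum_congr rfl fun x _ => Finset.sum_congr rfl fun x' _ => ?_
      have h2 : ∀ a : Fin k,
          (∑ b, (deg w x * (f x a * f x b)) * (deg w x' * (f x' a * f x' b)))
          = (deg w x * deg w x' * (f x a * f x' a)) * ip x x' := by
        intro a
        rw [hip, Finset.mul_sum]
        exact Finset.sum_congr rfl fun b _ => by ring
      rw [Finset.sum_congr rfl fun a _ => h2 a, ← Finset.sum_mul, ← Finset.mul_sum]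
      simp only [hip]
      ring
    have e2 : (∑ a : Fin k, ∑ b : Fin k,
        2 * (if a = b then (∑ x, deg w x * (f x a * f x b)) else 0)) = 2 * ST := by
      have h3 : ∀ a : Fin k, (∑ b : Fin k,
          2 * (if a = b then (∑ x, deg w x * (f x a * f x b)) else 0)) =
          2 * ∑ x, deg w x * (f x a * f x a) := by
        intro a
        rw [← Finset.mul_sum]
        congr 1
        simp
      rw [Finset.sum_congr rfl fun a _ => h3 a, ← Finset.mul_sum, Finset.sum_comm]
      congr 1
      rw [hST]
      refine Finset.sum_congr rfl fun x _ => ?_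
      rw [← Finset.mul_sum]
    have e3 : (∑ a : Fin k, ∑ b : Fin k, if a = b then (1:ℝ) else 0) = k := by
      simp
    rw [e1, e2, e3]
  -- entrywise product with B
  have hMB : ∀ x x', M x x' * B x x' =
      σ⁻¹ * (w x x' * ip x x') +
        (1 - σ⁻¹) * (if x = x' then deg w x * ip x x else 0) := by
    intro x x'
    rw [hMe, hBe]
    have hne : Real.sqrt (deg w x) * Real.sqrt (deg w x') ≠ 0 :=
      (mul_pos (hspos x) (hspos x')).ne'
    have key : ∀ t u v z : ℝ, t ≠ 0 →
        t * u * (σ⁻¹ * (v / t) + (1 - σ⁻¹) * z) =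
          σ⁻¹ * (v * u) + (1 - σ⁻¹) * (z * (t * u)) := by
      intro t u v z ht
      field_simp
    by_cases h : x = x'
    · subst h
      simp only [if_pos rfl]
      rw [key _ _ _ _ hne]
      congr 2
      simp [hs2]
    · simp only [if_neg h]
      rw [key _ _ _ _ hne, mul_zero, zero_mul, mul_zero]
  -- right hand side sum
  have hRS : (∑ x, ∑ x', ((M - B) x x') ^ 2) =
      SS - 2 * (σ⁻¹ * SA + (1 - σ⁻¹) * ST) + SQ := by
    have hexp : ∀ x x', ((M - B) x x') ^ 2 =
        (M x x') ^ 2 - 2 * (M x x' * B x x') + (B x x') ^ 2 := by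
      intro x x'
      rw [Matrix.sub_apply]; ring
    simp only [hexp, Finset.sum_sub_distrib, Finset.sum_add_distrib]
    have e1 : (∑ x, ∑ x', (M x x') ^ 2) = SS := by
      refine Finset.sum_congr rfl fun x _ => Finset.sum_congr rfl fun x' _ => ?_
      rw [hMe]
      have h4 : (Real.sqrt (deg w x) * Real.sqrt (deg w x') * ip x x') ^ 2 =
          (Real.sqrt (deg w x) * Real.sqrt (deg w x)) *
            (Real.sqrt (deg w x') * Real.sqrt (deg w x')) * (ip x x') ^ 2 := by ring
      rw [h4, hs2, hs2]
    have e2 : (∑ x, ∑ x', M x x' * B x x') = σ⁻¹ * SA + (1 - σ⁻¹) * ST := by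
      simp only [hMB, Finset.sum_add_distrib]
      congr 1
      · rw [hSA, Finset.mul_sum]
        exact Finset.sum_congr rfl fun x _ => (Finset.mul_sum _ _ _).symm
      · rw [hST, Finset.mul_sum]
        refine Finset.sum_congr rfl fun x _ => ?_
        rw [← Finset.mul_sum]
        congr 1
        simp
    have e2' : (∑ x, ∑ x', 2 * (M x x' * B x x')) =
        2 * (σ⁻¹ * SA + (1 - σ⁻¹) * ST) := by
      rw [← e2, Finset.mul_sum]
      exact Finset.sum_congr rfl fun x _ => (Finset.mul_sum _ _ _).symm
    rw [e1, e2']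
  -- conclude
  have hgoal : Lgen w σ f = 2 * ST - 2 * SA + σ * (SS - 2 * ST + k) := by
    rw [Lgen, hL1, hL2]
  rw [hgoal, hRS]
  field_simp
  ring
end

section
/- Fix i ∈ [r], set ρ_i := w(T_i, S_i)/w(T_i), assume ŵ(x) := ∑_{x'∈T_i} w(x,x') > 0 for every x ∈ T_i, and let λ_{T_i} denote the second smallest eigenvalue of the Laplacian L_{T_i} := I − Ā_{T_i} of the restricted graph on T_i, where (Ā_{T_i})_{x,x'} := w(x,x')/√(ŵ(x)·ŵ(x')). Then for every integer t ≥ 1 there exists a vector Δ ∈ ℝ^{T_i} with ‖Δ‖₂² ≤ (1 − λ_{T_i}/2)^{2(t−1)}·w(T_i) such that for every x ∈ T_i, (((1/2)·I_N + (1/2)·Ā)^t g_i)_x ≥ (1/2)·(1−α)^t·ρ_i·√(w(x)) + Δ_x. -/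
open Finset Matrix

/-- The vector with entry `√(w(x))` on a subset `A` and `0` elsewhere. -/
noncomputable def hvec {N : ℕ} (w : Fin N → Fin N → ℝ) (A : Finset (Fin N)) :
    Fin N → ℝ :=
  fun x => if x ∈ A then Real.sqrt (deg w x) else 0

/-- The lazy random-walk matrix `(1/2)·I + (1/2)·Ā`. -/
noncomputable def lazyA {N : ℕ} (w : Fin N → Fin N → ℝ) : Matrix (Fin N) (Fin N) ℝ :=
  ((1 : ℝ) / 2) • (1 : Matrix (Fin N) (Fin N) ℝ) + ((1 : ℝ) / 2) • nadj w

/-!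
Let `φ` be the restriction to `T` of one lazy step applied to `g`; since `g` vanishes on `T`,
`φ x = w(x, S) / (2 √w(x))`. Entrywise the lazy walk dominates, on `T`, `(1 - α)` times the lazy
walk `M` of the restricted graph (because `ŵ ≥ (1 - α) w` there), and all entries are
nonnegative, so `(lazyA^t g)|_T ≥ (1 - α)^(t-1) M^(t-1) φ`. The vector `v = √ŵ` is fixed by `M`;
split `φ = p v + ψ` with `ψ ⊥ v`. The part along `v` gives the main term, via
`⟨φ, v⟩ ≥ √(1-α) w(T,S) / 2`, `v ≥ √(1-α) √w` and `‖v‖² ≤ w(T)`. The rest,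
`Δ = (1 - α)^(t-1) M^(t-1) ψ`, is bounded spectrally: the eigenvalues `1 - λ_j / 2` of `M` lie
in `[0, 1]`, and the only one that can exceed `1 - λ_1 / 2` is that of `u_0`, in which case `u_0`
is parallel to `v` and hence orthogonal to `ψ`.
-/

namespace Matrix

section Orthonormal

variable {ι : Type*} [Fintype ι] [DecidableEq ι] {n : ℕ} {u : Fin n → ι → ℝ}

theorem transpose_mul_self_eq_one_of_orthonormal (hcard : Fintype.card ι = n)
    (horth : ∀ j j', u j ⬝ᵥ u j' = if j = j' then 1 else 0) :
    (of u)ᵀ * of u = 1 := by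
  refine (mul_eq_one_comm_of_equiv (Fintype.equivFinOfCardEq hcard).symm).mp ?_
  ext j j'
  simpa [mul_apply, one_apply, dotProduct] using horth j j'

theorem dotProduct_eq_sum_of_orthonormal (hcard : Fintype.card ι = n)
    (horth : ∀ j j', u j ⬝ᵥ u j' = if j = j' then 1 else 0) (f g : ι → ℝ) :
    f ⬝ᵥ g = ∑ j, (u j ⬝ᵥ f) * (u j ⬝ᵥ g) := by
  calc f ⬝ᵥ g = f ⬝ᵥ ((of u)ᵀ * of u) *ᵥ g := by
        rw [transpose_mul_self_eq_one_of_orthonormal hcard horth, one_mulVec]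
    _ = (of u *ᵥ f) ⬝ᵥ (of u *ᵥ g) := by
        rw [← mulVec_mulVec, dotProduct_mulVec, vecMul_transpose]
    _ = ∑ j, (u j ⬝ᵥ f) * (u j ⬝ᵥ g) := rfl

theorem dotProduct_eq_zero_of_orthonormal (hcard : Fintype.card ι = n)
    (horth : ∀ j j', u j ⬝ᵥ u j' = if j = j' then 1 else 0) {v f : ι → ℝ} (j₀ : Fin n)
    (hv : v ⬝ᵥ v ≠ 0) (hvu : ∀ j ≠ j₀, u j ⬝ᵥ v = 0) (hvf : v ⬝ᵥ f = 0) :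
    u j₀ ⬝ᵥ f = 0 := by
  have hsum (g : ι → ℝ) : v ⬝ᵥ g = (u j₀ ⬝ᵥ v) * (u j₀ ⬝ᵥ g) := by
    rw [dotProduct_eq_sum_of_orthonormal hcard horth,
      Finset.sum_eq_single j₀ (fun j _ hj => by rw [hvu j hj, zero_mul]) (by simp)]
  rw [hsum] at hv hvf
  exact (mul_eq_zero.mp hvf).resolve_left (left_ne_zero_of_mul hv)

end Orthonormal

section Projection

variable {ι : Type*} [Fintype ι] {v : ι → ℝ}

theorem dotProduct_sub_div_smul_eq_zero (hv : v ⬝ᵥ v ≠ 0) (f : ι → ℝ) :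
    v ⬝ᵥ (f - (v ⬝ᵥ f / (v ⬝ᵥ v)) • v) = 0 := by
  rw [dotProduct_sub, dotProduct_smul, smul_eq_mul, div_mul_cancel₀ _ hv, sub_self]

theorem dotProduct_self_sub_div_smul_le (hv : 0 < v ⬝ᵥ v) (f : ι → ℝ) :
    (f - (v ⬝ᵥ f / (v ⬝ᵥ v)) • v) ⬝ᵥ (f - (v ⬝ᵥ f / (v ⬝ᵥ v)) • v) ≤ f ⬝ᵥ f := by
  have h : (f - (v ⬝ᵥ f / (v ⬝ᵥ v)) • v) ⬝ᵥ (f - (v ⬝ᵥ f / (v ⬝ᵥ v)) • v)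
      = f ⬝ᵥ f - (v ⬝ᵥ f) ^ 2 / (v ⬝ᵥ v) := by
    simp only [sub_dotProduct, dotProduct_sub, smul_dotProduct, dotProduct_smul, smul_eq_mul,
      dotProduct_comm f v]
    field_simp
    ring
  rw [h]
  exact sub_le_self _ (by positivity)

end Projection

section Symmetric

variable {ι : Type*} [Fintype ι] [DecidableEq ι] {M : Matrix ι ι ℝ}

theorem IsSymm.dotProduct_pow_mulVec_of_mulVec_eq (hM : M.IsSymm) {u : ι → ℝ} {μ : ℝ}
    (hu : M *ᵥ u = μ • u) (f : ι → ℝ) (k : ℕ) :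
    u ⬝ᵥ (M ^ k *ᵥ f) = μ ^ k * (u ⬝ᵥ f) := by
  induction k with
  | zero => simp
  | succ k ih =>
    rw [pow_succ', ← mulVec_mulVec, dotProduct_mulVec, ← mulVec_transpose, hM.eq, hu,
      smul_dotProduct, ih, smul_eq_mul, pow_succ']
    ring

theorem IsSymm.dotProduct_eq_zero_of_mulVec_eq (hM : M.IsSymm) {u v : ι → ℝ} {μ ν : ℝ}
    (hu : M *ᵥ u = μ • u) (hv : M *ᵥ v = ν • v) (hμν : μ ≠ ν) : u ⬝ᵥ v = 0 := by
  have h := hM.dotProduct_pow_mulVec_of_mulVec_eq hu v 1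
  rw [pow_one, pow_one, hv, dotProduct_smul, smul_eq_mul] at h
  exact (mul_eq_zero.mp (by linear_combination h : (ν - μ) * (u ⬝ᵥ v) = 0)).resolve_left
    (sub_ne_zero.mpr hμν.symm)

theorem IsSymm.dotProduct_self_pow_mulVec_le (hM : M.IsSymm) {n : ℕ} {u : Fin n → ι → ℝ}
    (hcard : Fintype.card ι = n) (horth : ∀ j j', u j ⬝ᵥ u j' = if j = j' then 1 else 0)
    {μ : Fin n → ℝ} (heig : ∀ j, M *ᵥ u j = μ j • u j) {f : ι → ℝ} {c : ℝ}
    (hc : ∀ j, u j ⬝ᵥ f ≠ 0 → |μ j| ≤ c) (k : ℕ) :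
    (M ^ k *ᵥ f) ⬝ᵥ (M ^ k *ᵥ f) ≤ c ^ (2 * k) * (f ⬝ᵥ f) := by
  rw [dotProduct_eq_sum_of_orthonormal hcard horth, dotProduct_eq_sum_of_orthonormal hcard horth,
    Finset.mul_sum]
  refine Finset.sum_le_sum fun j _ => ?_
  rw [hM.dotProduct_pow_mulVec_of_mulVec_eq (heig j)]
  by_cases hf : u j ⬝ᵥ f = 0
  · simp [hf]
  · calc μ j ^ k * (u j ⬝ᵥ f) * (μ j ^ k * (u j ⬝ᵥ f))
        = |μ j| ^ (2 * k) * ((u j ⬝ᵥ f) * (u j ⬝ᵥ f)) := by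
          rw [pow_mul, sq_abs]; ring
      _ ≤ c ^ (2 * k) * ((u j ⬝ᵥ f) * (u j ⬝ᵥ f)) := by
          gcongr
          · exact mul_self_nonneg _
          · exact hc j hf

end Symmetric

end Matrix

noncomputable def normAdj {κ : Type*} [Fintype κ] (W : κ → κ → ℝ) : Matrix κ κ ℝ :=
  of fun x y => W x y / √((∑ z, W x z) * ∑ z, W y z)

noncomputable def lazyWalk {κ : Type*} [Fintype κ] [DecidableEq κ] (A : Matrix κ κ ℝ) :
    Matrix κ κ ℝ :=
  (1 / 2 : ℝ) • 1 + (1 / 2 : ℝ) • A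

theorem lazyA_eq_lazyWalk {N : ℕ} (w : Fin N → Fin N → ℝ) : lazyA w = lazyWalk (normAdj w) :=
  rfl

section NormAdj

variable {κ : Type*} [Fintype κ] {W : κ → κ → ℝ}

theorem normAdj_apply_nonneg (hnonneg : ∀ x y, 0 ≤ W x y) (x y : κ) : 0 ≤ normAdj W x y :=
  div_nonneg (hnonneg x y) (Real.sqrt_nonneg _)

theorem normAdj_isSymm (hsymm : ∀ x y, W x y = W y x) : (normAdj W).IsSymm := by
  ext x y
  simp only [normAdj, transpose_apply, of_apply, hsymm x y, mul_comm]

noncomputable def sqrtDeg (W : κ → κ → ℝ) (x : κ) : ℝ := √(∑ y, W x y)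

theorem normAdj_mulVec_sqrtDeg (hdeg : ∀ x, 0 < ∑ y, W x y) :
    normAdj W *ᵥ sqrtDeg W = sqrtDeg W := by
  ext x
  have hx := Real.sqrt_pos.mpr (hdeg x)
  have e : ∀ y, normAdj W x y * √(∑ z, W y z) = W x y / √(∑ z, W x z) := fun y => by
    have hy := Real.sqrt_pos.mpr (hdeg y)
    rw [normAdj, of_apply, Real.sqrt_mul (hdeg x).le]
    field_simp
  simp only [mulVec, dotProduct, sqrtDeg, e, ← Finset.sum_div, Real.div_sqrt]

theorem abs_dotProduct_normAdj_mulVec_le (hsymm : ∀ x y, W x y = W y x)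
    (hnonneg : ∀ x y, 0 ≤ W x y) (hdeg : ∀ x, 0 < ∑ y, W x y) (f : κ → ℝ) :
    |f ⬝ᵥ (normAdj W *ᵥ f)| ≤ f ⬝ᵥ f := by
  set g : κ → ℝ := fun x => f x / √(∑ y, W x y)
  have hcross : f ⬝ᵥ (normAdj W *ᵥ f) = ∑ x, ∑ y, W x y * (g x * g y) := by
    simp only [dotProduct, mulVec, Finset.mul_sum]
    refine Finset.sum_congr rfl fun x _ => Finset.sum_congr rfl fun y _ => ?_
    rw [normAdj, of_apply, Real.sqrt_mul (hdeg x).le]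
    simp only [g]
    ring
  have hleft : f ⬝ᵥ f = ∑ x, ∑ y, W x y * g x ^ 2 := by
    refine Finset.sum_congr rfl fun x _ => ?_
    rw [← Finset.sum_mul, div_pow, Real.sq_sqrt (hdeg x).le]
    field_simp [(hdeg x).ne']
  have hright : f ⬝ᵥ f = ∑ x, ∑ y, W x y * g y ^ 2 := by
    rw [hleft, Finset.sum_comm]
    simp only [hsymm]
  have hsq (s : ℝ) (hs : s ^ 2 = 1) :
      ∑ x, ∑ y, W x y * (g x + s * g y) ^ 2 = 2 * (f ⬝ᵥ f + s * (f ⬝ᵥ (normAdj W *ᵥ f))) := by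
    have e : ∀ x y, W x y * (g x + s * g y) ^ 2
        = W x y * g x ^ 2 + W x y * g y ^ 2 + 2 * s * (W x y * (g x * g y)) := fun x y => by
      linear_combination (W x y * g y ^ 2) * hs
    simp only [e, Finset.sum_add_distrib, ← Finset.mul_sum]
    rw [hcross, ← hleft, ← hright]
    ring
  have hnn (s : ℝ) : 0 ≤ ∑ x, ∑ y, W x y * (g x + s * g y) ^ 2 :=
    Finset.sum_nonneg fun x _ => Finset.sum_nonneg fun y _ => mul_nonneg (hnonneg x y) (sq_nonneg _)
  have h₁ := hsq 1 (by norm_num) ▸ hnn 1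
  have h₂ := hsq (-1) (by norm_num) ▸ hnn (-1)
  rw [abs_le]
  constructor <;> linarith

theorem mem_Icc_of_one_sub_normAdj_mulVec_eq (hsymm : ∀ x y, W x y = W y x)
    (hnonneg : ∀ x y, 0 ≤ W x y) (hdeg : ∀ x, 0 < ∑ y, W x y) [DecidableEq κ] {u : κ → ℝ} {c : ℝ}
    (hu : (1 - normAdj W) *ᵥ u = c • u) (hunit : u ⬝ᵥ u = 1) : c ∈ Set.Icc 0 2 := by
  have h : u ⬝ᵥ (normAdj W *ᵥ u) = 1 - c := by
    have := congrArg (u ⬝ᵥ ·) hu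
    simp only [sub_mulVec, one_mulVec, dotProduct_sub, dotProduct_smul, smul_eq_mul, hunit] at this
    linarith
  have := abs_dotProduct_normAdj_mulVec_le hsymm hnonneg hdeg u
  rw [h, hunit, abs_le] at this
  constructor <;> linarith

end NormAdj

section LazyWalk

variable {κ : Type*} [Fintype κ] [DecidableEq κ] {A : Matrix κ κ ℝ}

theorem lazyWalk_apply (x y : κ) :
    lazyWalk A x y = (if x = y then 1 / 2 else 0) + A x y / 2 := by
  simp [lazyWalk, one_apply, div_eq_inv_mul]

theorem lazyWalk_apply_nonneg (hA : ∀ x y, 0 ≤ A x y) (x y : κ) : 0 ≤ lazyWalk A x y := by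
  rw [lazyWalk_apply]
  have := hA x y
  split_ifs <;> linarith

theorem Matrix.IsSymm.lazyWalk (hA : A.IsSymm) : (lazyWalk A).IsSymm :=
  (isSymm_one.smul _).add (hA.smul _)

theorem lazyWalk_mulVec_eq {u : κ → ℝ} {c : ℝ} (hu : (1 - A) *ᵥ u = c • u) :
    lazyWalk A *ᵥ u = (1 - c / 2) • u := by
  rw [sub_mulVec, one_mulVec, sub_eq_iff_eq_add] at hu
  rw [lazyWalk, add_mulVec, smul_mulVec, smul_mulVec, one_mulVec]
  ext x
  have := congrFun hu x
  simp only [Pi.add_apply, Pi.smul_apply, smul_eq_mul] at this ⊢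
  linarith

end LazyWalk

section Spectral

variable {κ : Type*} [Fintype κ] [DecidableEq κ] {W : κ → κ → ℝ}

theorem lazyWalk_normAdj_pow_mulVec_sqrtDeg (hdeg : ∀ x, 0 < ∑ y, W x y) (k : ℕ) :
    lazyWalk (normAdj W) ^ k *ᵥ sqrtDeg W = sqrtDeg W := by
  have h : lazyWalk (normAdj W) *ᵥ sqrtDeg W = sqrtDeg W := by
    simpa using lazyWalk_mulVec_eq (A := normAdj W) (c := 0)
      (by rw [sub_mulVec, one_mulVec, normAdj_mulVec_sqrtDeg hdeg, sub_self, zero_smul])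
  induction k with
  | zero => simp
  | succ k ih => rw [pow_succ, ← mulVec_mulVec, h, ih]

theorem exists_lazyWalk_normAdj_pow_mulVec_eq_smul_sqrtDeg_add (hsymm : ∀ x y, W x y = W y x)
    (hnonneg : ∀ x y, 0 ≤ W x y) (hdeg : ∀ x, 0 < ∑ y, W x y) {n : ℕ} (hn : 1 < n)
    {u : Fin n → κ → ℝ} {lam : Fin n → ℝ} (hcard : Fintype.card κ = n)
    (horth : ∀ j j', u j ⬝ᵥ u j' = if j = j' then 1 else 0)
    (heig : ∀ j, (1 - normAdj W) *ᵥ u j = lam j • u j) (hmono : Monotone lam)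
    (f : κ → ℝ) (k : ℕ) :
    ∃ Δ : κ → ℝ, Δ ⬝ᵥ Δ ≤ (1 - lam ⟨1, hn⟩ / 2) ^ (2 * k) * (f ⬝ᵥ f) ∧
      lazyWalk (normAdj W) ^ k *ᵥ f =
        ((sqrtDeg W ⬝ᵥ f) / (sqrtDeg W ⬝ᵥ sqrtDeg W)) • sqrtDeg W + Δ := by
  set M := lazyWalk (normAdj W)
  set v := sqrtDeg W
  set p := (v ⬝ᵥ f) / (v ⬝ᵥ v)
  set ψ := f - p • v
  refine ⟨M ^ k *ᵥ ψ, ?_, by rw [mulVec_sub, mulVec_smul,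
    lazyWalk_normAdj_pow_mulVec_sqrtDeg hdeg, add_sub_cancel]⟩
  have hvv : 0 < v ⬝ᵥ v := by
    have : Nonempty κ := Fintype.card_pos_iff.mp (by omega)
    exact Finset.sum_pos (fun x _ => Real.mul_self_sqrt (hdeg x).le ▸ hdeg x) Finset.univ_nonempty
  have hvψ : v ⬝ᵥ ψ = 0 := dotProduct_sub_div_smul_eq_zero hvv.ne' f
  have hψψ : ψ ⬝ᵥ ψ ≤ f ⬝ᵥ f := dotProduct_self_sub_div_smul_le hvv f
  have hM : M.IsSymm := (normAdj_isSymm hsymm).lazyWalk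
  have heigM j : M *ᵥ u j = (1 - lam j / 2) • u j := lazyWalk_mulVec_eq (heig j)
  have hlam j : lam j ∈ Set.Icc 0 2 :=
    mem_Icc_of_one_sub_normAdj_mulVec_eq hsymm hnonneg hdeg (heig j) (by simpa using horth j j)
  have hgap j (hj : u j ⬝ᵥ ψ ≠ 0) : |1 - lam j / 2| ≤ 1 - lam ⟨1, hn⟩ / 2 := by
    rw [abs_of_nonneg (by linarith [(hlam j).2])]
    -- Otherwise `j = 0` and `lam 0 < lam 1`, so every other eigenvalue of `M` differs from the
    -- eigenvalue `1` of `v`: then `u 0` is parallel to `v`, which is orthogonal to `ψ`.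
    by_contra! hlt
    have hj0 : j.val < 1 := hmono.reflect_lt (by linarith : lam j < lam ⟨1, hn⟩)
    refine hj (dotProduct_eq_zero_of_orthonormal hcard horth j hvv.ne' (fun j' hj' => ?_) hvψ)
    have h1 : lam ⟨1, hn⟩ ≤ lam j' :=
      hmono (show 1 ≤ j'.val from Nat.one_le_iff_ne_zero.mpr fun h => hj' (Fin.ext (by omega)))
    refine hM.dotProduct_eq_zero_of_mulVec_eq (heigM j') (ν := 1) ?_ ?_
    · simpa using lazyWalk_normAdj_pow_mulVec_sqrtDeg hdeg 1
    · linarith [(hlam j).1]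
  calc (M ^ k *ᵥ ψ) ⬝ᵥ (M ^ k *ᵥ ψ) ≤ (1 - lam ⟨1, hn⟩ / 2) ^ (2 * k) * (ψ ⬝ᵥ ψ) :=
        hM.dotProduct_self_pow_mulVec_le hcard horth heigM hgap k
    _ ≤ (1 - lam ⟨1, hn⟩ / 2) ^ (2 * k) * (f ⬝ᵥ f) := by
        gcongr
        rw [pow_mul]
        positivity

end Spectral

section Restriction

variable {κ ι : Type*} [Fintype κ] [Fintype ι] [DecidableEq κ] [DecidableEq ι]

theorem pow_mulVec_apply_nonneg {A : Matrix ι ι ℝ} (hA : ∀ x y, 0 ≤ A x y) {f : ι → ℝ}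
    (hf : ∀ x, 0 ≤ f x) (k : ℕ) (x : ι) : 0 ≤ (A ^ k *ᵥ f) x := by
  induction k generalizing x with
  | zero => simpa using hf x
  | succ k ih =>
    rw [pow_succ', ← mulVec_mulVec]
    exact Finset.sum_nonneg fun y _ => mul_nonneg (hA x y) (ih y)

theorem pow_mulVec_apply_le_of_embedding (e : κ ↪ ι) {B : Matrix κ κ ℝ} {A : Matrix ι ι ℝ}
    (hB : ∀ x y, 0 ≤ B x y) (hA : ∀ x y, 0 ≤ A x y) (hBA : ∀ x y, B x y ≤ A (e x) (e y))
    {g : κ → ℝ} {f : ι → ℝ} (hg : ∀ x, 0 ≤ g x) (hf : ∀ x, 0 ≤ f x)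
    (hgf : ∀ x, g x ≤ f (e x)) (k : ℕ) (x : κ) : (B ^ k *ᵥ g) x ≤ (A ^ k *ᵥ f) (e x) := by
  induction k generalizing x with
  | zero => simpa using hgf x
  | succ k ih =>
    simp only [pow_succ', ← mulVec_mulVec]
    calc ∑ y, B x y * (B ^ k *ᵥ g) y
        ≤ ∑ y, A (e x) (e y) * (A ^ k *ᵥ f) (e y) :=
          Finset.sum_le_sum fun y _ => mul_le_mul (hBA x y) (ih y)
            (pow_mulVec_apply_nonneg hB hg k y) (hA _ _)
      _ = ∑ z ∈ Finset.univ.map e, A (e x) z * (A ^ k *ᵥ f) z :=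
          (Finset.sum_map Finset.univ e fun z => A (e x) z * (A ^ k *ᵥ f) z).symm
      _ ≤ ∑ z, A (e x) z * (A ^ k *ᵥ f) z := Finset.sum_le_univ_sum_of_nonneg fun z =>
          mul_nonneg (hA _ _) (pow_mulVec_apply_nonneg hA hf k z)

theorem mul_lazyWalk_normAdj_comp_le (e : κ ↪ ι) {W : ι → ι → ℝ} (hnonneg : ∀ x y, 0 ≤ W x y)
    (hdeg : ∀ x, 0 < ∑ y, W x y) {c : ℝ} (hc0 : 0 ≤ c) (hc1 : c ≤ 1)
    (hc : ∀ x, c * ∑ z, W (e x) z ≤ ∑ y, W (e x) (e y)) (x y : κ) :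
    c * lazyWalk (normAdj fun x y => W (e x) (e y)) x y ≤ lazyWalk (normAdj W) (e x) (e y) := by
  have hsqrt : c * √((∑ z, W (e x) z) * ∑ z, W (e y) z)
      ≤ √((∑ z, W (e x) (e z)) * ∑ z, W (e y) (e z)) := by
    rw [← Real.sqrt_sq hc0, ← Real.sqrt_mul (sq_nonneg c), sq, mul_mul_mul_comm]
    exact Real.sqrt_le_sqrt (mul_le_mul (hc x) (hc y) (mul_nonneg hc0 (hdeg _).le)
      (le_trans (mul_nonneg hc0 (hdeg _).le) (hc x)))
  have hadj : c * normAdj (fun x y => W (e x) (e y)) x y ≤ normAdj W (e x) (e y) := by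
    simp only [normAdj, of_apply]
    set a := √((∑ z, W (e x) z) * ∑ z, W (e y) z)
    set a' := √((∑ z, W (e x) (e z)) * ∑ z, W (e y) (e z))
    have ha : 0 < a := Real.sqrt_pos.mpr (mul_pos (hdeg _) (hdeg _))
    by_cases ha' : a' = 0
    · rw [ha', div_zero, mul_zero]
      exact div_nonneg (hnonneg _ _) ha.le
    · rw [mul_div_assoc', div_le_div_iff₀ ((Real.sqrt_nonneg _).lt_of_ne' ha') ha]
      nlinarith [hnonneg (e x) (e y)]
  simp only [lazyWalk_apply, e.injective.eq_iff]
  split_ifs <;> linarith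

end Restriction

section Clusters

variable {N : ℕ} {w : Fin N → Fin N → ℝ}

theorem lazyA_mulVec_hvec_apply_of_notMem (hdeg : ∀ x, 0 < deg w x) {A : Finset (Fin N)}
    {x : Fin N} (hx : x ∉ A) :
    (lazyA w *ᵥ hvec w A) x = (∑ y ∈ A, w x y) / (2 * √(deg w x)) := by
  have hterm : ∀ y ∈ A, normAdj w x y / 2 * √(deg w y) = w x y / (2 * √(deg w x)) := by
    intro y _
    have := Real.sqrt_pos.mpr (hdeg y)
    change w x y / √(deg w x * deg w y) / 2 * _ = _
    rw [Real.sqrt_mul (hdeg x).le]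
    field_simp
  simp only [lazyA_eq_lazyWalk, mulVec, dotProduct, lazyWalk_apply, add_mul, ite_mul, zero_mul,
    Finset.sum_add_distrib, Finset.sum_ite_eq, hvec, hx, if_false,
    mul_zero, zero_add, mul_ite, Finset.sum_ite_mem, Finset.univ_inter, Finset.sum_div]
  exact Finset.sum_congr rfl hterm

theorem one_sub_mul_deg_le_sum {A : Finset (Fin N)} {x : Fin N} {α : ℝ}
    (h : ∑ y ∈ Aᶜ, w x y ≤ α * deg w x) : (1 - α) * deg w x ≤ ∑ y ∈ A, w x y := by
  have := Finset.sum_add_sum_compl A (w x)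
  rw [deg] at h ⊢
  linarith

variable {T S : Finset (Fin N)}

theorem dotProduct_self_lazyA_mulVec_hvec_le (hnonneg : ∀ x y, 0 ≤ w x y)
    (hdeg : ∀ x, 0 < deg w x) (hTS : Disjoint T S) :
    ((fun x : T => (lazyA w *ᵥ hvec w S) x) ⬝ᵥ fun x : T => (lazyA w *ᵥ hvec w S) x) ≤
      ∑ x ∈ T, deg w x := by
  rw [dotProduct, ← Finset.sum_coe_sort T]
  refine Finset.sum_le_sum fun x _ => ?_
  rw [← sq, lazyA_mulVec_hvec_apply_of_notMem hdeg (Finset.disjoint_left.mp hTS x.2), div_pow,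
    mul_pow, Real.sq_sqrt (hdeg x).le, div_le_iff₀ (by have := hdeg x; positivity)]
  have h₀ : 0 ≤ ∑ y ∈ S, w x y := Finset.sum_nonneg fun y _ => hnonneg x y
  have h₁ : ∑ y ∈ S, w x y ≤ deg w x :=
    Finset.sum_le_univ_sum_of_nonneg fun y => hnonneg x y
  nlinarith

theorem le_dotProduct_div_dotProduct_mul_sqrtDeg (hnonneg : ∀ x y, 0 ≤ w x y)
    (hdeg : ∀ x, 0 < deg w x) (hTS : Disjoint T S) {c : ℝ} (hc0 : 0 < c)
    (hc : ∀ x ∈ T, c * deg w x ≤ ∑ y ∈ T, w x y) (x : T) :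
    c / 2 * ((∑ y ∈ T, ∑ z ∈ S, w y z) / ∑ y ∈ T, deg w y) * √(deg w x) ≤
      (sqrtDeg (fun y z : T => w y z) ⬝ᵥ fun y : T => (lazyA w *ᵥ hvec w S) y) /
        (sqrtDeg (fun y z : T => w y z) ⬝ᵥ sqrtDeg fun y z : T => w y z) *
        sqrtDeg (fun y z : T => w y z) x := by
  set v := sqrtDeg fun y z : T => w y z
  have hA : 0 ≤ ∑ y ∈ T, ∑ z ∈ S, w y z :=
    Finset.sum_nonneg fun y _ => Finset.sum_nonneg fun z _ => hnonneg y z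
  have hv (y : T) : √c * √(deg w y) ≤ v y := by
    rw [← Real.sqrt_mul hc0.le]
    exact Real.sqrt_le_sqrt ((hc y y.2).trans_eq (Finset.sum_coe_sort T _).symm)
  have hvpos (y : T) : 0 < v y :=
    (mul_pos (Real.sqrt_pos.mpr hc0) (Real.sqrt_pos.mpr (hdeg y))).trans_le (hv y)
  have hvφ : √c / 2 * ∑ y ∈ T, ∑ z ∈ S, w y z ≤ v ⬝ᵥ fun y : T => (lazyA w *ᵥ hvec w S) y := by
    rw [← Finset.sum_coe_sort T, Finset.mul_sum]
    refine Finset.sum_le_sum fun y _ => ?_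
    beta_reduce
    rw [lazyA_mulVec_hvec_apply_of_notMem hdeg (Finset.disjoint_left.mp hTS y.2)]
    have hsd := Real.sqrt_pos.mpr (hdeg y)
    calc √c / 2 * ∑ z ∈ S, w y z
        = √c * √(deg w y) * ((∑ z ∈ S, w y z) / (2 * √(deg w y))) := by field_simp
      _ ≤ v y * ((∑ z ∈ S, w y z) / (2 * √(deg w y))) := by
          gcongr
          · exact div_nonneg (Finset.sum_nonneg fun z _ => hnonneg y z) (by positivity)
          · exact hv y
  have hvφ₀ : 0 ≤ v ⬝ᵥ fun y : T => (lazyA w *ᵥ hvec w S) y :=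
    (mul_nonneg (by positivity) hA).trans hvφ
  have hvv : v ⬝ᵥ v ≤ ∑ y ∈ T, deg w y := by
    rw [← Finset.sum_coe_sort T]
    refine Finset.sum_le_sum fun y _ => ?_
    simp only [v, sqrtDeg]
    rw [Real.mul_self_sqrt (Finset.sum_nonneg fun z _ => hnonneg _ _),
      Finset.sum_coe_sort T fun z => w y z]
    exact Finset.sum_le_univ_sum_of_nonneg fun z => hnonneg y z
  have hvvpos : 0 < v ⬝ᵥ v :=
    (mul_pos (hvpos x) (hvpos x)).trans_le
      (Finset.single_le_sum (f := fun y => v y * v y) (fun y _ => mul_self_nonneg _)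
        (Finset.mem_univ x))
  calc c / 2 * ((∑ y ∈ T, ∑ z ∈ S, w y z) / ∑ y ∈ T, deg w y) * √(deg w x)
      = (√c / 2 * ∑ y ∈ T, ∑ z ∈ S, w y z) * (√c * √(deg w x)) / ∑ y ∈ T, deg w y := by
        linear_combination (-(∑ y ∈ T, ∑ z ∈ S, w y z) * √(deg w x) / (2 * ∑ y ∈ T, deg w y)) *
          Real.mul_self_sqrt hc0.le
    _ ≤ (v ⬝ᵥ fun y : T => (lazyA w *ᵥ hvec w S) y) * v x / (v ⬝ᵥ v) :=
        div_le_div₀ (mul_nonneg hvφ₀ (hvpos x).le)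
          (mul_le_mul hvφ (hv x) (by positivity) hvφ₀) hvvpos hvv
    _ = _ := by ring

theorem pow_mul_lazyWalk_pow_mulVec_apply_le (hnonneg : ∀ x y, 0 ≤ w x y)
    (hdeg : ∀ x, 0 < deg w x) {c : ℝ}
    (hc0 : 0 ≤ c) (hc1 : c ≤ 1) (hc : ∀ x ∈ T, c * deg w x ≤ ∑ y ∈ T, w x y) (k : ℕ) (x : T) :
    c ^ k * (lazyWalk (normAdj fun y z : T => w y z) ^ k *ᵥ
        fun y : T => (lazyA w *ᵥ hvec w S) y) x ≤ (lazyA w ^ (k + 1) *ᵥ hvec w S) x := by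
  have hA : ∀ x y, 0 ≤ lazyA w x y := lazyWalk_apply_nonneg (normAdj_apply_nonneg hnonneg)
  have hg : ∀ x, 0 ≤ (lazyA w *ᵥ hvec w S) x := by
    simpa using pow_mulVec_apply_nonneg hA (fun x => by unfold hvec; positivity) 1
  have := pow_mulVec_apply_le_of_embedding (.subtype (· ∈ T))
    (B := c • lazyWalk (normAdj fun y z : T => w y z)) (A := lazyA w)
    (fun x y => mul_nonneg hc0 (lazyWalk_apply_nonneg (normAdj_apply_nonneg fun _ _ =>
      hnonneg _ _) x y)) hA
    (mul_lazyWalk_normAdj_comp_le (.subtype (· ∈ T)) hnonneg hdeg hc0 hc1 fun x : T =>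
      (hc x x.2).trans_eq (Finset.sum_coe_sort T _).symm)
    (fun x => hg x) hg (fun _ => le_rfl) k x
  rwa [smul_pow, smul_mulVec, Pi.smul_apply, smul_eq_mul, mulVec_mulVec, ← pow_succ] at this

end Clusters

/-- Lower bound on the probability that a lazy random walk
started in `T_i` arrives in `S_i`. -/
theorem stmt12 {N m r : ℕ} (w : Fin N → Fin N → ℝ)
    (hsymm : ∀ x x', w x x' = w x' x)
    (hnonneg : ∀ x x', 0 ≤ w x x')
    (hdeg : ∀ x, 0 < deg w x)
    (C : Fin m → Finset (Fin N))
    (hpart : ∀ x : Fin N, ∃! i : Fin m, x ∈ C i)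
    (α : ℝ) (hα0 : 0 < α) (hα1 : α < 1)
    (hexp : ∀ i : Fin m, ∀ x ∈ C i, (∑ x' ∈ (C i)ᶜ, w x x') ≤ α * deg w x)
    (hrm : 2 * r ≤ m)
    (S T : Fin r → Finset (Fin N))
    (hS : ∀ i : Fin r, S i = C ⟨i.1, by have := i.isLt; omega⟩)
    (hT : ∀ i : Fin r, T i = C ⟨r + i.1, by have := i.isLt; omega⟩)
    (i : Fin r)
    -- restricted degrees on `T_i` are positive
    (hwhat : ∀ x ∈ T i, 0 < ∑ x' ∈ T i, w x x')
    (hcard : 2 ≤ (T i).card)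
    -- an orthonormal eigenbasis of the Laplacian `L_{T_i} = I − Ā_{T_i}` of the
    -- restricted graph on `T_i`, with eigenvalues in nondecreasing order
    (lam : Fin (T i).card → ℝ) (u : Fin (T i).card → ↥(T i) → ℝ)
    (horth : ∀ j j' : Fin (T i).card,
        (∑ x : ↥(T i), u j x * u j' x) = if j = j' then (1 : ℝ) else 0)
    (heig : ∀ j : Fin (T i).card,
        ((1 : Matrix ↥(T i) ↥(T i) ℝ) -
            Matrix.of fun x y : ↥(T i) => w x.1 y.1 /
              Real.sqrt ((∑ x' ∈ T i, w x.1 x') * (∑ x' ∈ T i, w y.1 x'))) *ᵥ u j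
          = lam j • u j)
    (hmono : Monotone lam) :
    ∀ t : ℕ, 1 ≤ t →
      ∃ Δ : ↥(T i) → ℝ,
        (∑ x : ↥(T i), Δ x ^ 2) ≤
          (1 - lam ⟨1, by omega⟩ / 2) ^ (2 * (t - 1)) * (∑ x ∈ T i, deg w x) ∧
        ∀ x : ↥(T i),
          (1 / 2) * (1 - α) ^ t *
              ((∑ x' ∈ T i, ∑ x'' ∈ S i, w x' x'') / (∑ x' ∈ T i, deg w x')) *
              Real.sqrt (deg w x.1) + Δ x ≤
            ((lazyA w ^ t) *ᵥ hvec w (S i)) x.1 := by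
  intro t ht
  obtain ⟨k, rfl⟩ : ∃ k, t = k + 1 := ⟨t - 1, by omega⟩
  rw [Nat.add_sub_cancel]
  have hTS : Disjoint (T i) (S i) := by
    rw [hS, hT]
    exact Finset.disjoint_left.mpr fun x hxT hxS => by
      have : r + i.1 = i.1 := Fin.mk.inj_iff.mp ((hpart x).unique hxT hxS)
      omega
  have hc : ∀ x ∈ T i, (1 - α) * deg w x ≤ ∑ y ∈ T i, w x y := fun x hx =>
    one_sub_mul_deg_le_sum (by rw [hT] at hx ⊢; exact hexp _ x hx)
  set W : ↥(T i) → ↥(T i) → ℝ := fun x y => w x y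
  set φ : ↥(T i) → ℝ := fun x => (lazyA w *ᵥ hvec w (S i)) x
  have hAT : (Matrix.of fun x y : ↥(T i) => w x.1 y.1 /
      Real.sqrt ((∑ x' ∈ T i, w x.1 x') * (∑ x' ∈ T i, w y.1 x'))) = normAdj W := by
    ext x y
    simp only [normAdj, of_apply, W, Finset.sum_coe_sort (T i)]
  obtain ⟨Δ, hΔ, hφ⟩ := exists_lazyWalk_normAdj_pow_mulVec_eq_smul_sqrtDeg_add (W := W)
    (fun x y => hsymm x y) (fun x y => hnonneg x y)
    (fun x => (hwhat x x.2).trans_eq (Finset.sum_coe_sort (T i) _).symm)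
    (by omega) (Fintype.card_coe _) horth (hAT ▸ heig) hmono φ k
  refine ⟨(1 - α) ^ k • Δ, ?_, fun x => ?_⟩
  · calc ∑ x, ((1 - α) ^ k • Δ) x ^ 2 = ((1 - α) ^ k) ^ 2 * (Δ ⬝ᵥ Δ) := by
          simp only [Pi.smul_apply, smul_eq_mul, mul_pow, dotProduct, ← sq, Finset.mul_sum]
      _ ≤ Δ ⬝ᵥ Δ := mul_le_of_le_one_left (by simpa using dotProduct_self_star_nonneg Δ)
          (pow_le_one₀ (by positivity) (pow_le_one₀ (by linarith) (by linarith)))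
      _ ≤ _ := hΔ.trans (mul_le_mul_of_nonneg_left
          (dotProduct_self_lazyA_mulVec_hvec_le hnonneg hdeg hTS) (by rw [pow_mul]; positivity))
  · have hproj := le_dotProduct_div_dotProduct_mul_sqrtDeg hnonneg hdeg hTS
      (by linarith) hc x
    calc _ = (1 - α) ^ k * ((1 - α) / 2 * ((∑ x' ∈ T i, ∑ x'' ∈ S i, w x' x'') /
            (∑ x' ∈ T i, deg w x')) * √(deg w x) + Δ x) := by
          rw [Pi.smul_apply, smul_eq_mul, pow_succ]; ring
      _ ≤ (1 - α) ^ k * (lazyWalk (normAdj W) ^ k *ᵥ φ) x := by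
          rw [hφ, Pi.add_apply, Pi.smul_apply, smul_eq_mul]
          gcongr
      _ ≤ _ := pow_mul_lazyWalk_pow_mulVec_apply_le hnonneg hdeg (by linarith) (by linarith) hc k x
end
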